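/- Let N ≥ 2 and let s_1⋯s_q and t_1⋯t_p be admissible blocks with q ≥ p. If s_1⋯s_p > t_1⋯t_p lexicographically (as length-p blocks), then the generalized Thue–Morse sequence generated by s_1⋯s_q^+ is lexicographically ≥ the generalized Thue–Morse sequence generated by t_1⋯t_p^+. -/

import Mathlib

/-!
Write `u = t⁺` and `p = |u|`. It suffices to show that the GTM sequence generated by any nonempty
`u ≤ s₁⋯s_p` is at most the one generated by `s⁺`. If `u ≠ s₁⋯s_p`, their first difference
already decides. Otherwise `s = u d`, the sequence generated by `u` starts with `u (ū)⁺` and the one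
generated by `s⁺` starts with `u d⁺`. Admissibility of `s` at the rotation by `p` forbids `d` to
fall below `ū` at a first difference; together with admissibility at the rotation by `2p` it also
forbids `d` to be a proper extension of `ū` (an induction on the length of the extension). What
remains is `d = ū`, where the two sequences coincide, a first difference between `(ū)⁺` and `d⁺`
in the right direction, or `s` beginning with `u (ū)⁺`. This doubled block generates the same
sequence as `u` and is longer, so in the last case we recurse.
-/

/-- Reflection of a block: each digit `c` becomes `N - 1 - c`. -/
def reflB (N : ℕ) (w : List ℕ) : List ℕ := w.map (fun c => N - 1 - c)

/-- The block `w` with its last digit incremented by one. -/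
def plusB (w : List ℕ) : List ℕ := w.dropLast ++ [w.getLast! + 1]

/-- The `i`-th cyclic rotation of the block `w` (0-indexed). -/
def rotB (w : List ℕ) (i : ℕ) : List ℕ := w.drop i ++ w.take i

/-- The lexicographic inequalities defining admissibility of a block. -/
def AdmissibleIneq (N : ℕ) (w : List ℕ) : Prop :=
  ∀ i < w.length,
    reflB N w ≤ rotB w i ∧ plusB (w.drop i) ++ reflB N (w.take i) ≤ plusB w

/-- An admissible block in `{0, …, N-1}`. -/
def Admissible (N : ℕ) (w : List ℕ) : Prop :=
  w ≠ [] ∧ (∀ c ∈ w, c < N) ∧ w.getLast! < N - 1 ∧ AdmissibleIneq N w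

/-- Prefixes of the generalized Thue–Morse sequence generated by `plusB w`:
`gtmBlock N w n` is the prefix `θ_1 ⋯ θ_{2^n p}`. -/
def gtmBlock (N : ℕ) (w : List ℕ) : ℕ → List ℕ
  | 0 => plusB w
  | n + 1 => gtmBlock N w n ++ plusB (reflB N (gtmBlock N w n))

/-- The generalized Thue–Morse sequence generated by `plusB w`, 0-indexed:
`gtm N w n = θ_{n+1}`. -/
def gtm (N : ℕ) (w : List ℕ) : ℕ → ℕ := fun n => (gtmBlock N w n).getD n 0

/-- Strict lexicographic order on infinite sequences of digits. -/
def seqLt (a b : ℕ → ℕ) : Prop := ∃ n, (∀ k < n, a k = b k) ∧ a n < b n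

/-- Lexicographic order on infinite sequences of digits. -/
def seqLe (a b : ℕ → ℕ) : Prop := seqLt a b ∨ a = b

/-- Shift of a sequence by `k` places. -/
def shift (a : ℕ → ℕ) (k : ℕ) : ℕ → ℕ := fun n => a (n + k)

/-- The periodic sequence `w^∞` obtained by repeating the block `w`. -/
def per (w : List ℕ) : ℕ → ℕ := fun n => w.getD (n % w.length) 0

/-- Reflection of an infinite sequence. -/
def reflSeq (N : ℕ) (a : ℕ → ℕ) : ℕ → ℕ := fun n => N - 1 - a n

/-- The classical Thue–Morse sequence: parity of the binary digit sum. -/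
def tm (i : ℕ) : ℕ := (Nat.digits 2 i).sum % 2

/-- Number of length-`n` words appearing in sequences of `Z`. -/
noncomputable def wordCount (Z : Set (ℕ → ℕ)) (n : ℕ) : ℕ :=
  Set.ncard { u : List ℕ | u.length = n ∧ ∃ d ∈ Z, ∀ k < n, u.getD k 0 = d k }

/-- `Z` has topological entropy `h`. -/
def hasEntropy (Z : Set (ℕ → ℕ)) (h : ℝ) : Prop :=
  Filter.Tendsto (fun n : ℕ => Real.log (wordCount Z n) / n) Filter.atTop (nhds h)

/-- Unlike `x < y`, this survives appending arbitrary tails to both sides. -/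
def LexDiffLt (x y : List ℕ) : Prop :=
  ∃ c a b x' y', a < b ∧ x = c ++ a :: x' ∧ y = c ++ b :: y'

namespace LexDiffLt

variable {x y : List ℕ}

theorem append_left (c : List ℕ) (h : LexDiffLt x y) : LexDiffLt (c ++ x) (c ++ y) := by
  obtain ⟨c', a, b, x', y', hab, rfl, rfl⟩ := h
  exact ⟨c ++ c', a, b, x', y', hab, by simp, by simp⟩

theorem append_right (h : LexDiffLt x y) (x'' y'' : List ℕ) :
    LexDiffLt (x ++ x'') (y ++ y'') := by
  obtain ⟨c, a, b, x', y', hab, rfl, rfl⟩ := h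
  exact ⟨c, a, b, x' ++ x'', y' ++ y'', hab, by simp, by simp⟩

theorem lt (h : LexDiffLt x y) : x < y := by
  obtain ⟨c, a, b, x', y', hab, rfl, rfl⟩ := h
  exact List.append_left_lt (List.Lex.rel hab)

theorem not_le (h : LexDiffLt x y) : ¬ y ≤ x := _root_.not_le.mpr h.lt

end LexDiffLt

theorem lexDiffLt_or_isPrefix : ∀ x y : List ℕ,
    LexDiffLt x y ∨ LexDiffLt y x ∨ x <+: y ∨ y <+: x
  | [], _ => Or.inr (Or.inr (Or.inl List.nil_prefix))
  | _, [] => Or.inr (Or.inr (Or.inr List.nil_prefix))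
  | a :: x, b :: y => by
    rcases lt_trichotomy a b with hab | rfl | hab
    · exact Or.inl ⟨[], a, b, x, y, hab, rfl, rfl⟩
    · rcases lexDiffLt_or_isPrefix x y with h | h | h | h
      · exact Or.inl (h.append_left [a])
      · exact Or.inr (Or.inl (h.append_left [a]))
      · exact Or.inr (Or.inr (Or.inl (List.cons_prefix_cons.mpr ⟨rfl, h⟩)))
      · exact Or.inr (Or.inr (Or.inr (List.cons_prefix_cons.mpr ⟨rfl, h⟩)))
    · exact Or.inr (Or.inl ⟨[], b, a, y, x, hab, rfl, rfl⟩)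

theorem lexDiffLt_of_lt_of_length_eq {x y : List ℕ} (h : x < y) (hlen : x.length = y.length) :
    LexDiffLt x y := by
  rcases lexDiffLt_or_isPrefix x y with h' | h' | h' | h'
  · exact h'
  · exact absurd h'.lt (List.lt_asymm h)
  · exact absurd h (by rw [h'.eq_of_length hlen]; exact List.lt_irrefl _)
  · exact absurd h (by rw [h'.eq_of_length hlen.symm]; exact List.lt_irrefl _)

theorem append_le_append_left_iff {c x y : List ℕ} : c ++ x ≤ c ++ y ↔ x ≤ y :=
  ⟨fun h => not_lt.mp fun hyx => not_lt.mpr h (List.append_left_lt hyx),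
    fun h => h.eq_or_lt.elim (fun e => e ▸ le_rfl) fun hlt => (List.append_left_lt hlt).le⟩

theorem plusB_concat (c : List ℕ) (a : ℕ) : plusB (c ++ [a]) = c ++ [a + 1] := by
  rw [plusB, List.dropLast_concat, List.getLast!_of_getLast? List.getLast?_concat]

theorem plusB_append (x : List ℕ) {y : List ℕ} (hy : y ≠ []) : plusB (x ++ y) = x ++ plusB y := by
  obtain ⟨c, a, rfl⟩ := (List.eq_nil_or_concat' y).resolve_left hy
  rw [← List.append_assoc, plusB_concat, plusB_concat, List.append_assoc]

theorem plusB_append_cons (c : List ℕ) (a : ℕ) {x : List ℕ} (hx : x ≠ []) :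
    plusB (c ++ a :: x) = c ++ a :: plusB x := by
  simpa using plusB_append (c ++ [a]) hx

theorem plusB_length {w : List ℕ} (hw : w ≠ []) : (plusB w).length = w.length := by
  obtain ⟨c, a, rfl⟩ := (List.eq_nil_or_concat' w).resolve_left hw
  simp [plusB_concat]

theorem plusB_ne_nil (w : List ℕ) : plusB w ≠ [] := by
  simp [plusB]

theorem exists_plusB_append_cons (c : List ℕ) (a : ℕ) (x : List ℕ) :
    ∃ a' x', plusB (c ++ a :: x) = c ++ a' :: x' ∧ a ≤ a' := by
  rcases eq_or_ne x [] with rfl | hx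
  · exact ⟨a + 1, [], plusB_concat c a, a.le_succ⟩
  · exact ⟨a, plusB x, plusB_append_cons c a hx, le_rfl⟩

theorem LexDiffLt.plusB_right {x y : List ℕ} (h : LexDiffLt x y) : LexDiffLt x (plusB y) := by
  obtain ⟨c, a, b, x', y', hab, rfl, rfl⟩ := h
  obtain ⟨b', y'', hy, hb⟩ := exists_plusB_append_cons c b y'
  exact ⟨c, a, b', x', y'', hab.trans_le hb, rfl, hy⟩

theorem lexDiffLt_append_plusB_append {x : List ℕ} (hx : x ≠ []) (W W' : List ℕ) :
    LexDiffLt (x ++ W) (plusB x ++ W') := by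
  obtain ⟨c, a, rfl⟩ := (List.eq_nil_or_concat' x).resolve_left hx
  rw [plusB_concat]
  exact ⟨c, a, a + 1, W, W', a.lt_succ_self, by simp, by simp⟩

theorem LexDiffLt.plusB_le {x y : List ℕ} (h : LexDiffLt x y) (hlen : x.length = y.length) :
    plusB x ≤ y := by
  obtain ⟨c, a, b, x', y', hab, rfl, rfl⟩ := h
  rcases eq_or_ne x' [] with rfl | hx'
  · obtain rfl : y' = [] := by simpa using hlen.symm
    rw [plusB_concat]
    rcases (Nat.succ_le_of_lt hab).eq_or_lt with rfl | hlt
    · exact le_rfl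
    · exact (show LexDiffLt _ _ from ⟨c, a + 1, b, [], [], hlt, rfl, rfl⟩).lt.le
  · rw [plusB_append_cons c a hx']
    exact (show LexDiffLt _ _ from ⟨c, a, b, plusB x', y', hab, rfl, rfl⟩).lt.le

section reflB

variable {N : ℕ}

theorem reflB_append (x y : List ℕ) : reflB N (x ++ y) = reflB N x ++ reflB N y :=
  List.map_append

theorem length_reflB (w : List ℕ) : (reflB N w).length = w.length :=
  List.length_map _

theorem reflB_ne_nil {w : List ℕ} (hw : w ≠ []) : reflB N w ≠ [] := by
  simpa [reflB]

theorem le_of_mem_reflB {w : List ℕ} {c : ℕ} (hc : c ∈ reflB N w) : c ≤ N - 1 := by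
  obtain ⟨d, -, rfl⟩ := List.mem_map.mp hc
  omega

theorem reflB_reflB {w : List ℕ} (hw : ∀ c ∈ w, c ≤ N - 1) : reflB N (reflB N w) = w := by
  rw [reflB, reflB, List.map_map]
  refine (List.map_congr_left fun c hc => ?_).trans (List.map_id w)
  have := hw c hc
  simp only [Function.comp_apply, id]
  omega

end reflB

theorem AdmissibleIneq.append_split {N : ℕ} {x y : List ℕ} (hs : AdmissibleIneq N (x ++ y))
    (hy : y ≠ []) :
    reflB N x ++ reflB N y ≤ y ++ x ∧ plusB y ++ reflB N x ≤ x ++ plusB y := by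
  have hx : x.length < (x ++ y).length := by simp [List.length_pos_iff.mpr hy]
  obtain ⟨h1, h2⟩ := hs x.length hx
  simp only [rotB, List.drop_left, List.take_left, reflB_append] at h1 h2
  rw [plusB_append x hy] at h2
  exact ⟨h1, h2⟩

/-- For `w = u` and `P = ū u` these are the inequalities that admissibility at the rotations by
`|u|` and `2|u|` imposes on `u ū z`; the induction alternates between `w = u` and `w = ū`. -/
theorem not_le_and_plusB_le {N : ℕ} (u P : List ℕ) {z w : List ℕ} (hz : z ≠ [])
    (hw_ne : w ≠ []) (hw : ∀ c ∈ w, c ≤ N - 1) :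
    ¬ (w ++ reflB N z ≤ z ++ u ∧ plusB z ++ P ≤ w ++ (reflB N w ++ plusB z)) := by
  rintro ⟨hA, hB⟩
  induction hn : z.length using Nat.strong_induction_on generalizing z w with
  | _ n ih =>
  rcases lexDiffLt_or_isPrefix z w with h | h | ⟨w', rfl⟩ | ⟨z', rfl⟩
  · exact (h.append_right u (reflB N z)).not_le hA
  · exact (h.plusB_right.append_right _ P).not_le hB
  · rw [List.append_assoc] at hB
    exact (lexDiffLt_append_plusB_append hz _ P).not_le hB
  · rcases eq_or_ne z' [] with rfl | hz'
    · rw [List.append_nil] at hB hz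
      exact (lexDiffLt_append_plusB_append hz _ P).not_le hB
    rw [reflB_append, List.append_assoc] at hA
    rw [plusB_append w hz', List.append_assoc] at hB
    have hB' : plusB z' ++ P ≤ reflB N w ++ (reflB N (reflB N w) ++ plusB z') := by
      rw [reflB_reflB hw]
      exact append_le_append_left_iff.mp hB
    exact ih z'.length (by simp [← hn, List.length_pos_iff.mpr hw_ne]) hz' (reflB_ne_nil hw_ne)
      (fun _ => le_of_mem_reflB) (append_le_append_left_iff.mp hA) hB' rfl

theorem eq_or_lexDiffLt_plusB_or_eq_plusB_append {r d : List ℕ} (hd : d ≠ [])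
    (h_not_lt : ¬ LexDiffLt d r) (h_not_ext : ∀ z ≠ [], d ≠ r ++ z) :
    d = r ∨ LexDiffLt (plusB r) (plusB d) ∨ ∃ x ≠ [], d = plusB r ++ x := by
  rcases lexDiffLt_or_isPrefix r d with ⟨c, b, a, y, x, hba, rfl, rfl⟩ | h | ⟨z, rfl⟩ | ⟨z, rfl⟩
  · right
    rcases eq_or_ne y [] with rfl | hy
    · rw [plusB_concat]
      rcases (Nat.succ_le_of_lt hba).eq_or_lt with rfl | hlt
      · rcases eq_or_ne x [] with rfl | hx
        · left
          rw [plusB_concat]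
          exact ⟨c, b + 1, b + 2, [], [], by omega, rfl, rfl⟩
        · exact Or.inr ⟨x, hx, by simp⟩
      · exact Or.inl (LexDiffLt.plusB_right ⟨c, b + 1, a, [], x, hlt, rfl, rfl⟩)
    · rw [plusB_append_cons c b hy]
      exact Or.inl (LexDiffLt.plusB_right ⟨c, b, a, plusB y, x, hba, rfl, rfl⟩)
  · exact absurd h h_not_lt
  · rcases eq_or_ne z [] with rfl | hz
    · simp
    · exact absurd rfl (h_not_ext z hz)
  · rcases eq_or_ne z [] with rfl | hz
    · simp
    obtain ⟨c, a, rfl⟩ := (List.eq_nil_or_concat' d).resolve_left hd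
    rw [List.append_assoc, List.singleton_append, plusB_append_cons c a hz, plusB_concat]
    exact Or.inr (Or.inl ⟨c, a, a + 1, plusB z, [], a.lt_succ_self, rfl, rfl⟩)

theorem AdmissibleIneq.append_cases {N : ℕ} {u d : List ℕ} (hu_ne : u ≠ [])
    (hu : ∀ c ∈ u, c ≤ N - 1) (hs : AdmissibleIneq N (u ++ d)) (hd : d ≠ []) :
    d = reflB N u ∨ LexDiffLt (plusB (reflB N u)) (plusB d) ∨
      ∃ x ≠ [], d = plusB (reflB N u) ++ x := by
  have hrot := (hs.append_split hd).1
  refine eq_or_lexDiffLt_plusB_or_eq_plusB_append hd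
    (fun h => (h.append_right u (reflB N d)).not_le hrot) ?_
  rintro z hz rfl
  rw [reflB_append, reflB_reflB hu, List.append_assoc] at hrot
  have hs' : AdmissibleIneq N ((u ++ reflB N u) ++ z) := by simpa using hs
  have hrot₂ := (hs'.append_split hz).2
  rw [reflB_append, reflB_reflB hu, List.append_assoc] at hrot₂
  exact not_le_and_plusB_le u _ hz hu_ne hu
    ⟨append_le_append_left_iff.mp hrot, by simpa only [List.append_assoc] using hrot₂⟩

section gtmFrom

def gtmFromBlock (N : ℕ) (u : List ℕ) : ℕ → List ℕ
  | 0 => u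
  | n + 1 => gtmFromBlock N u n ++ plusB (reflB N (gtmFromBlock N u n))

def gtmFrom (N : ℕ) (u : List ℕ) (n : ℕ) : ℕ := (gtmFromBlock N u n).getD n 0

def IsSeqPrefix (L : List ℕ) (a : ℕ → ℕ) : Prop := ∀ k (hk : k < L.length), a k = L[k]

theorem seqLt_of_lexDiffLt {L M : List ℕ} {a b : ℕ → ℕ} (h : LexDiffLt L M)
    (ha : IsSeqPrefix L a) (hb : IsSeqPrefix M b) : seqLt a b := by
  obtain ⟨c, x, y, L', M', hxy, rfl, rfl⟩ := h
  refine ⟨c.length, fun k hk => ?_, ?_⟩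
  · rw [ha k (by simp; omega), hb k (by simp; omega), List.getElem_append_left hk,
      List.getElem_append_left hk]
  · rw [ha _ (by simp), hb _ (by simp)]
    simpa using hxy

variable {N : ℕ}

theorem gtmBlock_eq_gtmFromBlock (w : List ℕ) (n : ℕ) :
    gtmBlock N w n = gtmFromBlock N (plusB w) n := by
  induction n with
  | zero => rfl
  | succ n ih => simp only [gtmBlock, gtmFromBlock, ih]

theorem gtm_eq_gtmFrom (w : List ℕ) : gtm N w = gtmFrom N (plusB w) := by
  funext n
  simp only [gtm, gtmFrom, gtmBlock_eq_gtmFromBlock]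

theorem gtmFromBlock_double (u : List ℕ) (n : ℕ) :
    gtmFromBlock N (u ++ plusB (reflB N u)) n = gtmFromBlock N u (n + 1) := by
  induction n with
  | zero => rfl
  | succ n ih => simp only [gtmFromBlock, ih]

variable {u : List ℕ}

theorem length_gtmFromBlock (hu : u ≠ []) (n : ℕ) :
    (gtmFromBlock N u n).length = 2 ^ n * u.length := by
  induction n with
  | zero => simp [gtmFromBlock]
  | succ n ih =>
    have hB : gtmFromBlock N u n ≠ [] :=
      List.ne_nil_of_length_pos (by rw [ih]; have := List.length_pos_iff.mpr hu; positivity)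
    rw [gtmFromBlock, List.length_append, plusB_length (reflB_ne_nil hB), length_reflB, ih,
      pow_succ]
    ring

theorem lt_length_gtmFromBlock (hu : u ≠ []) (n : ℕ) : n < (gtmFromBlock N u n).length := by
  rw [length_gtmFromBlock hu]
  calc n < 2 ^ n := n.lt_two_pow_self
    _ ≤ 2 ^ n * u.length := Nat.le_mul_of_pos_right _ (List.length_pos_iff.mpr hu)

theorem gtmFromBlock_prefix {m n : ℕ} (h : m ≤ n) : gtmFromBlock N u m <+: gtmFromBlock N u n := by
  induction n, h using Nat.le_induction with
  | base => exact List.prefix_rfl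
  | succ n _ ih => exact ih.trans (List.prefix_append _ _)

theorem isSeqPrefix_gtmFromBlock (hu : u ≠ []) (n : ℕ) :
    IsSeqPrefix (gtmFromBlock N u n) (gtmFrom N u) := by
  intro k hk
  have hkk := lt_length_gtmFromBlock (N := N) hu k
  rw [gtmFrom, List.getD_eq_getElem _ _ hkk]
  rcases le_total k n with h | h
  · exact (gtmFromBlock_prefix h).getElem hkk
  · exact ((gtmFromBlock_prefix h).getElem hk).symm

theorem gtmFrom_double (hu : u ≠ []) : gtmFrom N (u ++ plusB (reflB N u)) = gtmFrom N u := by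
  funext k
  have hk : k < (gtmFromBlock N u (k + 1)).length :=
    k.lt_succ_self.trans (lt_length_gtmFromBlock hu _)
  rw [gtmFrom, gtmFromBlock_double, List.getD_eq_getElem _ _ hk,
    isSeqPrefix_gtmFromBlock hu (k + 1) k hk]

end gtmFrom

theorem seqLe_gtmFrom_gtm {N : ℕ} {s : List ℕ} (hs_digits : ∀ c ∈ s, c < N)
    (hs : AdmissibleIneq N s) {u : List ℕ} (hu : u ≠ []) (hus : u.length ≤ s.length)
    (hle : u ≤ s.take u.length) : seqLe (gtmFrom N u) (gtm N s) := by
  induction hK : s.length - u.length using Nat.strong_induction_on generalizing u with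
  | _ K ih =>
  have hs_pre : IsSeqPrefix (plusB s) (gtm N s) := by
    rw [gtm_eq_gtmFrom]; exact isSeqPrefix_gtmFromBlock (plusB_ne_nil s) 0
  have hu_pre : IsSeqPrefix u (gtmFrom N u) := isSeqPrefix_gtmFromBlock hu 0
  rcases hle.lt_or_eq with hlt | heq
  · have h := (lexDiffLt_of_lt_of_length_eq hlt (by simp; omega)).append_right [] (s.drop u.length)
    rw [List.append_nil, List.take_append_drop] at h
    exact Or.inl (seqLt_of_lexDiffLt h.plusB_right hu_pre hs_pre)
  obtain ⟨d, rfl⟩ := List.prefix_iff_eq_take.mpr heq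
  have hu_digits : ∀ c ∈ u, c ≤ N - 1 := fun c hc =>
    Nat.le_pred_of_lt (hs_digits c (List.mem_append_left d hc))
  rcases eq_or_ne d [] with rfl | hd
  · simp only [List.append_nil] at hs_pre ⊢
    exact Or.inl (seqLt_of_lexDiffLt (by simpa using lexDiffLt_append_plusB_append hu [] [])
      hu_pre hs_pre)
  rw [plusB_append u hd] at hs_pre
  rcases hs.append_cases hu hu_digits hd with rfl | hlt | ⟨x, hx, rfl⟩
  · exact Or.inr (by rw [gtm_eq_gtmFrom, plusB_append u hd, gtmFrom_double hu])
  · exact Or.inl (seqLt_of_lexDiffLt (hlt.append_left u) (isSeqPrefix_gtmFromBlock hu 1) hs_pre)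
  · have hx_len := List.length_pos_iff.mpr hx
    have hr_len : (plusB (reflB N u)).length = u.length := by
      rw [plusB_length (reflB_ne_nil hu), length_reflB]
    rw [← gtmFrom_double hu]
    refine ih _ ?_ (by simp [hu]) (by simp [hr_len]) ?_ rfl
    · have := List.length_pos_iff.mpr hu
      simp only [List.length_append, hr_len] at hK ⊢
      omega
    · rw [← List.append_assoc, List.take_left]

theorem stmt10_general (N : ℕ) (s t : List ℕ)
    (hs : Admissible N s) (ht : Admissible N t) (hlen : t.length ≤ s.length)
    (h : t < s.take t.length) :
    seqLe (gtm N t) (gtm N s) := by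
  have ht_len : (plusB t).length = t.length := plusB_length ht.1
  rw [gtm_eq_gtmFrom]
  refine seqLe_gtmFrom_gtm hs.2.1 hs.2.2.2 (plusB_ne_nil t) (ht_len ▸ hlen) ?_
  rw [ht_len]
  exact (lexDiffLt_of_lt_of_length_eq h (by simp [hlen])).plusB_le (by simp [hlen])

/-- Lemma 5.8 — for admissible blocks `s` (length `q`) and
`t` (length `p`) with `q ≥ p`, if `s_1⋯s_p > t_1⋯t_p` then GTM(`s^+`) `≥` GTM(`t^+`). -/
theorem stmt10 (N : ℕ) (hN : 2 ≤ N) (s t : List ℕ)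
    (hs : Admissible N s) (ht : Admissible N t) (hlen : t.length ≤ s.length)
    (h : t < s.take t.length) :
    seqLe (gtm N t) (gtm N s) :=
  stmt10_general N s t hs ht hlen h
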